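/- For type A_n^{(1)} and each fundamental weight Λ_i, the map sending a reduced proper Young wall (equivalently, an n-reduced colored Young diagram) to the λ-path obtained by reading the residue of the top box of each column (reading the color j-1 of the top box as the path entry j, and an empty column in ground state as the appropriate ground entry) is a bijection from 𝒴(Λ_i) to the set 𝒫(Λ_i) of Λ_i-paths in the level-1 perfect crystal B = {1,…,n,0}, and this bijection commutes with all Kashiwara operators ẽ_i, f̃_i; hence 𝒴(Λ_i) ≅ B(Λ_i) as affine crystals. -/

import Mathlib

/-- Cancel all adjacent `(+,−)`-pairs in a word of signs (`true` = `+`, `false` = `−`),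
tagged by the index of the column contributing the sign. The first list is a stack (in
reverse order) of the already-processed, reduced prefix. -/
def reduceSigns : List (ℕ × Bool) → List (ℕ × Bool) → List (ℕ × Bool)
  | acc, [] => acc.reverse
  | [], x :: rest => reduceSigns [x] rest
  | y :: acc, x :: rest =>
      if y.2 = true ∧ x.2 = false then reduceSigns acc rest
      else reduceSigns (x :: y :: acc) rest

/-- The color of the block in column `k` (counted from the right, starting at `0`) and
row `r` (from the bottom, starting at `0`) in the `A_n^{(1)}` stacking pattern on the
ground-state wall `Y_{Λ_m}`: colors increase by `1` going up and decrease by `1` going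
left. -/
def wallColor (n : ℕ) (m : ZMod (n + 1)) (k r : ℕ) : ZMod (n + 1) :=
  m + (r : ZMod (n + 1)) - (k : ZMod (n + 1))

/-- A Young wall of type `A_n^{(1)}`, recorded by its column heights: the heights weakly
decrease from right to left, and only finitely many blocks have been added to the
ground-state wall. (For type `A_n^{(1)}` every Young wall is proper.) -/
def IsWall (h : ℕ → ℕ) : Prop :=
  (∀ k, h (k + 1) ≤ h k) ∧ ∃ K, h K = 0

/-- A proper Young wall of type `A_n^{(1)}` is reduced iff no column contains a
removable `δ`-column (`n+1` consecutive blocks, one of each color): removing `n+1`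
blocks from the top of any column must break the Young wall condition. -/
def ReducedWall (n : ℕ) (h : ℕ → ℕ) : Prop := ∀ k, h k ≤ h (k + 1) + n

/-- The sign contributed by column `k` to the `i`-signature: `some false` (a `−`) if the
top of the column is a removable `i`-block, `some true` (a `+`) if the top of the column
is an `i`-admissible slot, and `none` otherwise. -/
def wallSign (n : ℕ) (m i : ZMod (n + 1)) (h : ℕ → ℕ) (k : ℕ) : Option Bool :=
  if 1 ≤ h k ∧ wallColor n m k (h k - 1) = i ∧ h (k + 1) < h k then some false
  else if wallColor n m k (h k) = i ∧ (k = 0 ∨ h k + 1 ≤ h (k - 1)) then some true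
  else none

-- The reduced `i`-signature of a Young wall: the signs of the columns, read from left
-- (large `k`) to right (column `0`), with all `(+,−)`-pairs cancelled.
open Classical in
noncomputable def wallWord (n : ℕ) (m i : ZMod (n + 1)) (h : ℕ → ℕ) : List (ℕ × Bool) :=
  if hz : ∃ K, h K = 0 then
    reduceSigns []
      (((List.range (Nat.find hz + 1)).reverse).filterMap
        (fun k => (wallSign n m i h k).map (fun s => (k, s))))
  else []

/-- Kashiwara operator `ẽ_i` on Young walls: remove the `i`-block at the column carrying
the rightmost `−` in the reduced `i`-signature (`none` if there is no `−`). -/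
noncomputable def wallE (n : ℕ) (m i : ZMod (n + 1)) (h : ℕ → ℕ) : Option (ℕ → ℕ) :=
  match (wallWord n m i h).reverse.find? (fun x => !x.2) with
  | some (k, _) => some (Function.update h k (h k - 1))
  | none => none

/-- Kashiwara operator `f̃_i` on Young walls: add an `i`-block at the column carrying
the leftmost `+` in the reduced `i`-signature (`none` if there is no `+`). -/
noncomputable def wallF (n : ℕ) (m i : ZMod (n + 1)) (h : ℕ → ℕ) : Option (ℕ → ℕ) :=
  match (wallWord n m i h).find? (fun x => x.2) with
  | some (k, _) => some (Function.update h k (h k + 1))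
  | none => none

/-- The ground-state path of weight `Λ_m` for type `A_n^{(1)}`:
`p_{Λ_m} = (…, 1, 2, …, n, 0, 1, 2, …, m)`, i.e. `p(k) = m − k` in the level-1 perfect
crystal `B = {1, …, n, 0}` labelled by `ZMod (n+1)`. -/
def groundPath (n : ℕ) (m : ZMod (n + 1)) (k : ℕ) : ZMod (n + 1) :=
  m - (k : ZMod (n + 1))

/-- A `Λ_m`-path: a sequence in the perfect crystal agreeing with the ground-state path
for `k ≫ 0`. -/
def IsPath (n : ℕ) (m : ZMod (n + 1)) (p : ℕ → ZMod (n + 1)) : Prop :=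
  ∃ N, ∀ k ≥ N, p k = groundPath n m k

/-- The reduced `i`-signature of the truncated path `p(N) ⊗ ⋯ ⊗ p(0)`: each entry `b`
contributes a `−` if `b = i+1` (i.e. `ε_i(b) = 1`) and a `+` if `b = i`
(i.e. `φ_i(b) = 1`), read from position `N` (left) down to position `0` (right),
with all `(+,−)`-pairs cancelled. -/
def pathWord (n : ℕ) (i : ZMod (n + 1)) (p : ℕ → ZMod (n + 1)) (N : ℕ) :
    List (ℕ × Bool) :=
  reduceSigns []
    (((List.range (N + 1)).reverse).flatMap (fun k =>
      (if p k = i + 1 then [(k, false)] else []) ++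
        (if p k = i then [(k, true)] else [])))

-- Kashiwara operator `ẽ_i` on `Λ_m`-paths, via the signature rule applied to the
-- truncation `p(N) ⊗ ⋯ ⊗ p(0)` (with `N` least such that `p` is in ground state from
-- `N` on); `ε_i(p)` discounts the sign contributed by the ground-state tail.
open Classical in
noncomputable def pathE (n : ℕ) (m i : ZMod (n + 1)) (p : ℕ → ZMod (n + 1)) :
    Option (ℕ → ZMod (n + 1)) :=
  if hP : ∃ N, ∀ k ≥ N, p k = groundPath n m k then
    let N := Nat.find hP
    let w := pathWord n i p N
    if w.countP (fun x => !x.2) ≤ (if groundPath n m N = i + 1 then 1 else 0) then none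
    else
      match w.reverse.find? (fun x => !x.2) with
      | some (k, _) => some (Function.update p k (p k - 1))
      | none => none
  else none

-- Kashiwara operator `f̃_i` on `Λ_m`-paths: act at the position carrying the leftmost
-- surviving `+`.
open Classical in
noncomputable def pathF (n : ℕ) (m i : ZMod (n + 1)) (p : ℕ → ZMod (n + 1)) :
    Option (ℕ → ZMod (n + 1)) :=
  if hP : ∃ N, ∀ k ≥ N, p k = groundPath n m k then
    match (pathWord n i p (Nat.find hP)).find? (fun x => x.2) with
    | some (k, _) => some (Function.update p k (p k + 1))
    | none => none
  else none

/-- Reading the top box of each column of a Young wall (an empty ground-state column is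
read as the appropriate ground entry) gives a sequence in the level-1 perfect crystal:
the top box of column `k` has color `m + h k − 1 − k`, which is read as the entry
`m + h k − k`. -/
def wallToPath (n : ℕ) (m : ZMod (n + 1)) (h : ℕ → ℕ) : ℕ → ZMod (n + 1) :=
  fun k => m + (h k : ZMod (n + 1)) - (k : ZMod (n + 1))

section Aux

def stp : List (ℕ × Bool) → ℕ × Bool → List (ℕ × Bool)
  | [], x => [x]
  | y :: acc, x => if y.2 = true ∧ x.2 = false then acc else x :: y :: acc

lemma reduceSigns_eq (l : List (ℕ × Bool)) :
    ∀ acc, reduceSigns acc l = (l.foldl stp acc).reverse := by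
  induction l with
  | nil => intro acc; simp [reduceSigns]
  | cons x rest ih =>
    intro acc
    match acc with
    | [] => simp [reduceSigns, stp, ih]
    | y :: acc =>
      by_cases hc : y.2 = true ∧ x.2 = false
      · simp [reduceSigns, stp, hc, ih]
      · simp [reduceSigns, stp, hc, ih]

lemma stp_true (S : List (ℕ × Bool)) (x : ℕ × Bool) (hx : x.2 = true) : stp S x = x :: S := by
  cases S with
  | nil => rfl
  | cons y S => simp [stp, hx]

lemma stp_pop (S : List (ℕ × Bool)) (y x : ℕ × Bool) (hy : y.2 = true) (hx : x.2 = false) :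
    stp (y :: S) x = S := by simp [stp, hy, hx]

lemma stp_bottom (b : ℕ × Bool) (hb : b.2 = false) (S : List (ℕ × Bool)) (x : ℕ × Bool) :
    stp (S ++ [b]) x = stp S x ++ [b] := by
  cases S with
  | nil => simp [stp, hb]
  | cons y S => by_cases hc : y.2 = true ∧ x.2 = false <;> simp [stp, hc]

lemma foldl_stp_bottom (b : ℕ × Bool) (hb : b.2 = false) (l : List (ℕ × Bool)) :
    ∀ S, List.foldl stp (S ++ [b]) l = List.foldl stp S l ++ [b] := by
  induction l with
  | nil => intro S; simp
  | cons x rest ih => intro S; simp only [List.foldl_cons, stp_bottom b hb S x, ih]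

lemma mem_stp {S : List (ℕ × Bool)} {a x : ℕ × Bool} (hx : x ∈ stp S a) : x ∈ S ∨ x = a := by
  cases S with
  | nil => simp [stp] at hx; right; exact hx
  | cons y S =>
    by_cases hc : y.2 = true ∧ a.2 = false
    · simp [stp, hc] at hx; left; simp [hx]
    · simp [stp, hc] at hx
      rcases hx with h | h | h
      · right; exact h
      · left; simp [h]
      · left; simp [h]

lemma mem_foldl_stp (l : List (ℕ × Bool)) :
    ∀ S x, x ∈ List.foldl stp S l → x ∈ S ∨ x ∈ l := by
  induction l with
  | nil => intro S x hx; left; exact hx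
  | cons a rest ih =>
    intro S x hx
    rcases ih _ _ hx with h | h
    · rcases mem_stp h with h' | h'
      · left; exact h'
      · right; simp [h']
    · right; simp [h]

lemma find?_append_left {l₁ l₂ : List (ℕ × Bool)} {q : ℕ × Bool → Bool} {x : ℕ × Bool}
    (h : l₁.find? q = some x) : (l₁ ++ l₂).find? q = some x := by
  rw [List.find?_append, h]; rfl

end Aux
section Signs

variable {n : ℕ} {m i : ZMod (n + 1)} {h : ℕ → ℕ}

lemma zmodOneNeZero (hn : 1 ≤ n) : (1 : ZMod (n + 1)) ≠ 0 := by
  haveI : Fact (1 < n + 1) := ⟨by omega⟩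
  exact one_ne_zero

lemma sign_minus {k : ℕ} (h1 : 1 ≤ h k) (hpk : wallToPath n m h k = i + 1)
    (hlt : h (k + 1) < h k) : wallSign n m i h k = some false := by
  unfold wallSign
  rw [if_pos]
  refine ⟨h1, ?_, hlt⟩
  unfold wallColor
  unfold wallToPath at hpk
  rw [Nat.cast_sub h1, Nat.cast_one]
  linear_combination hpk

lemma sign_minus' (hn : 1 ≤ n) {k : ℕ} (h1 : 1 ≤ h k) (hpk : wallToPath n m h k = i + 1)
    (heq : h (k + 1) = h k) : wallSign n m i h k = none := by
  unfold wallSign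
  rw [if_neg, if_neg]
  · rintro ⟨hc, -⟩
    unfold wallColor at hc
    unfold wallToPath at hpk
    exact zmodOneNeZero hn (by linear_combination hc - hpk)
  · rintro ⟨-, -, hlt⟩
    omega

lemma sign_plus (hn : 1 ≤ n) {k : ℕ} (hpk : wallToPath n m h k = i)
    (hslot : k = 0 ∨ h k + 1 ≤ h (k - 1)) : wallSign n m i h k = some true := by
  unfold wallSign
  rw [if_neg, if_pos]
  · refine ⟨?_, hslot⟩
    unfold wallColor
    unfold wallToPath at hpk
    linear_combination hpk
  · rintro ⟨hh1, hcol, -⟩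
    unfold wallColor at hcol
    rw [Nat.cast_sub hh1, Nat.cast_one] at hcol
    unfold wallToPath at hpk
    exact zmodOneNeZero hn (by linear_combination hpk - hcol)

lemma sign_plus' (hn : 1 ≤ n) {k : ℕ} (hk : 1 ≤ k) (hpk : wallToPath n m h k = i)
    (heq : h (k - 1) = h k) : wallSign n m i h k = none := by
  unfold wallSign
  rw [if_neg, if_neg]
  · rintro ⟨-, hor⟩
    rcases hor with h0 | hle
    · omega
    · omega
  · rintro ⟨hh1, hcol, -⟩
    unfold wallColor at hcol
    rw [Nat.cast_sub hh1, Nat.cast_one] at hcol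
    unfold wallToPath at hpk
    exact zmodOneNeZero hn (by linear_combination hpk - hcol)

lemma sign_none {k : ℕ} (h1 : wallToPath n m h k ≠ i) (h2 : wallToPath n m h k ≠ i + 1) :
    wallSign n m i h k = none := by
  unfold wallSign
  rw [if_neg, if_neg]
  · rintro ⟨hcol, -⟩
    unfold wallColor at hcol
    exact h1 (by unfold wallToPath; linear_combination hcol)
  · rintro ⟨hh1, hcol, -⟩
    unfold wallColor at hcol
    rw [Nat.cast_sub hh1, Nat.cast_one] at hcol
    exact h2 (by unfold wallToPath; linear_combination hcol)

lemma wallSign_false {k : ℕ} (hs : wallSign n m i h k = some false) :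
    1 ≤ h k ∧ wallToPath n m h k = i + 1 := by
  unfold wallSign at hs
  split_ifs at hs with hc1 hc2
  · obtain ⟨hh1, hcol, -⟩ := hc1
    refine ⟨hh1, ?_⟩
    unfold wallColor at hcol
    rw [Nat.cast_sub hh1, Nat.cast_one] at hcol
    unfold wallToPath
    linear_combination hcol
  · exact absurd hs (by simp)

lemma p_step {k : ℕ} (hk : 1 ≤ k) (heq : h (k - 1) = h k) :
    wallToPath n m h (k - 1) = wallToPath n m h k + 1 := by
  unfold wallToPath
  rw [heq, Nat.cast_sub hk, Nat.cast_one]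
  ring

end Signs
section Word

variable {n : ℕ} {m i : ZMod (n + 1)} {h : ℕ → ℕ}

lemma h_anti (hd : ∀ k, h (k + 1) ≤ h k) : ∀ {j k : ℕ}, j ≤ k → h k ≤ h j := by
  intro j k hjk
  induction k, hjk using Nat.le_induction with
  | base => exact le_rfl
  | succ k hk ihk => exact le_trans (hd k) ihk

lemma word_core (hn : 1 ≤ n) (hd : ∀ k, h (k + 1) ≤ h k) (hz : ∃ K, h K = 0) :
    ∀ t, t ≤ Nat.find hz →
      ¬(1 ≤ t ∧ h (t - 1) = h t ∧ wallToPath n m h (t - 1) = i + 1) →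
      ∀ S : List (ℕ × Bool),
        List.foldl stp S ((List.range t).reverse.flatMap (fun k =>
          (if wallToPath n m h k = i + 1 then [(k, false)] else []) ++
            (if wallToPath n m h k = i then [(k, true)] else []))) =
        List.foldl stp S ((List.range t).reverse.filterMap
          (fun k => (wallSign n m i h k).map (fun s => (k, s)))) := by
  have hpos : ∀ k, k < Nat.find hz → 1 ≤ h k := fun k hk =>
    Nat.one_le_iff_ne_zero.mpr (Nat.find_min hz hk)
  intro t
  induction t using Nat.strong_induction_on with
  | _ t ih =>
    match t with
    | 0 => intro _ _ S; simp
    | (t' + 1) =>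
      intro ht hD S
      have ht' : t' < Nat.find hz := by omega
      have hp1 : 1 ≤ h t' := hpos t' ht'
      have hrange : (List.range (t' + 1)).reverse = t' :: (List.range t').reverse := by
        rw [List.range_succ]; simp
      rw [hrange]
      by_cases hDt' : 1 ≤ t' ∧ h (t' - 1) = h t' ∧ wallToPath n m h (t' - 1) = i + 1
      · -- cancelling pair at columns t', t'-1
        obtain ⟨ht'1, heq, hpm⟩ := hDt'
        obtain ⟨t'', rfl⟩ : ∃ t'', t' = t'' + 1 := ⟨t' - 1, by omega⟩
        simp only [Nat.add_sub_cancel] at heq hpm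
        have hstep := p_step (n := n) (m := m) (h := h) (k := t'' + 1) (by omega)
          (by simpa using heq)
        simp only [Nat.add_sub_cancel] at hstep
        have hpt' : wallToPath n m h (t'' + 1) = i := by
          rw [hstep] at hpm; linear_combination hpm
        have hne : wallToPath n m h (t'' + 1) ≠ i + 1 := by
          rw [hpt']; intro hcon; exact zmodOneNeZero hn (by linear_combination hcon.symm)
        have hne2 : wallToPath n m h t'' ≠ i := by
          rw [hpm]; intro hcon; exact zmodOneNeZero hn (by linear_combination hcon)
        have hf1 : wallSign n m i h (t'' + 1) = none := by
          apply sign_plus' hn (by omega) hpt'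
          simpa using heq
        have hf2 : wallSign n m i h t'' = none := by
          apply sign_minus' hn (hpos _ (by omega)) hpm heq.symm
        have hrange2 : (List.range (t'' + 1)).reverse = t'' :: (List.range t'').reverse := by
          rw [List.range_succ]; simp
        rw [hrange2, List.flatMap_cons, List.flatMap_cons,
          List.filterMap_cons_none (by rw [hf1]; rfl),
          List.filterMap_cons_none (by rw [hf2]; rfl)]
        simp only [if_pos hpt', if_neg hne, if_pos hpm, if_neg hne2, List.nil_append,
          List.append_nil]
        rw [List.foldl_append, List.foldl_cons, List.foldl_nil, List.foldl_append,
          List.foldl_cons, List.foldl_nil, stp_true S _ rfl, stp_pop S _ _ rfl rfl]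
        apply ih t'' (by omega) (by omega)
        rintro ⟨h1'', heq'', hpm''⟩
        have := p_step (n := n) (m := m) (h := h) (k := t'') h1'' heq''
        rw [this, hpm] at hpm''
        exact zmodOneNeZero hn (by linear_combination hpm'')
      · -- no cancelling pair with top at column t'
        have hih := ih t' (by omega) (by omega) hDt'
        by_cases hA : wallToPath n m h t' = i + 1
        · have hneB : wallToPath n m h t' ≠ i := by
            rw [hA]; intro hcon; exact zmodOneNeZero hn (by linear_combination hcon)
          have hlt : h (t' + 1) < h t' := by
            rcases Nat.lt_or_ge (h (t' + 1)) (h t') with hlt | hge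
            · exact hlt
            · exfalso
              exact hD ⟨by omega, by simpa using (le_antisymm (hd t') hge).symm, by simpa using hA⟩
          rw [List.flatMap_cons,
            List.filterMap_cons_some (by rw [sign_minus hp1 hA hlt]; rfl)]
          simp only [if_pos hA, if_neg hneB, List.append_nil]
          rw [List.foldl_append, List.foldl_cons, List.foldl_nil, List.foldl_cons]
          exact hih _
        · by_cases hB : wallToPath n m h t' = i
          · have hslot : t' = 0 ∨ h t' + 1 ≤ h (t' - 1) := by
              rcases Nat.eq_zero_or_pos t' with h0 | hp0
              · left; exact h0
              · right
                rcases Nat.lt_or_ge (h t') (h (t' - 1)) with hlt | hge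
                · omega
                · exfalso
                  have heq' : h (t' - 1) = h t' :=
                    le_antisymm hge (h_anti hd (by omega))
                  have := p_step (n := n) (m := m) (h := h) (k := t') hp0 heq'
                  exact hDt' ⟨hp0, heq', by rw [this, hB]⟩
            rw [List.flatMap_cons,
              List.filterMap_cons_some (by rw [sign_plus hn hB hslot]; rfl)]
            simp only [if_pos hB, if_neg hA, List.nil_append]
            rw [List.foldl_append, List.foldl_cons, List.foldl_nil, List.foldl_cons]
            exact hih _
          · rw [List.flatMap_cons, List.filterMap_cons_none (by rw [sign_none hB hA]; rfl)]
            simp only [if_neg hA, if_neg hB, List.append_nil, List.nil_append]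
            exact hih _

end Word
section WordEq

variable {n : ℕ} {m i : ZMod (n + 1)} {h : ℕ → ℕ}

lemma word_eq (hn : 1 ≤ n) (hd : ∀ k, h (k + 1) ≤ h k) (hz : ∃ K, h K = 0) :
    pathWord n i (wallToPath n m h) (Nat.find hz) =
      (if m - (Nat.find hz : ZMod (n + 1)) = i + 1 then [((Nat.find hz : ℕ), false)] else [])
        ++ wallWord n m i h := by
  have hK0 : h (Nat.find hz) = 0 := Nat.find_spec hz
  have hD0 : ¬(1 ≤ Nat.find hz ∧ h (Nat.find hz - 1) = h (Nat.find hz) ∧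
      wallToPath n m h (Nat.find hz - 1) = i + 1) := by
    rintro ⟨h1, heq, -⟩
    have := Nat.find_min hz (show Nat.find hz - 1 < Nat.find hz by omega)
    omega
  have hpK0 : wallToPath n m h (Nat.find hz) = m - (Nat.find hz : ZMod (n + 1)) := by
    unfold wallToPath; rw [hK0]; push_cast; ring
  have hcol0 : wallColor n m (Nat.find hz) (h (Nat.find hz)) = m - (Nat.find hz : ZMod (n + 1)) := by
    unfold wallColor; rw [hK0]; push_cast; ring
  have hslot0 : Nat.find hz = 0 ∨ h (Nat.find hz) + 1 ≤ h (Nat.find hz - 1) := by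
    rcases Nat.eq_zero_or_pos (Nat.find hz) with h0 | hp0
    · left; exact h0
    · right
      have := Nat.find_min hz (show Nat.find hz - 1 < Nat.find hz by omega)
      omega
  have hrange : (List.range (Nat.find hz + 1)).reverse
      = Nat.find hz :: (List.range (Nat.find hz)).reverse := by
    rw [List.range_succ]; simp
  unfold pathWord wallWord
  rw [dif_pos hz, hrange, List.flatMap_cons]
  by_cases hc1 : m - (Nat.find hz : ZMod (n + 1)) = i + 1
  · have hc2 : m - (Nat.find hz : ZMod (n + 1)) ≠ i := by
      rw [hc1]; intro hcon; exact zmodOneNeZero hn (by linear_combination hcon)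
    have hfK0 : wallSign n m i h (Nat.find hz) = none := by
      unfold wallSign
      rw [if_neg (by simp [hK0]), if_neg]
      rintro ⟨hc, -⟩
      rw [hcol0] at hc
      exact hc2 hc
    rw [List.filterMap_cons_none (by rw [hfK0]; rfl)]
    rw [if_pos (by rw [hpK0]; exact hc1), if_neg (by rw [hpK0]; exact hc2), if_pos hc1]
    rw [reduceSigns_eq, reduceSigns_eq]
    simp only [List.append_nil, List.singleton_append, List.foldl_cons]
    have : stp [] ((Nat.find hz : ℕ), false) = [] ++ [((Nat.find hz : ℕ), false)] := rfl
    rw [this, foldl_stp_bottom _ rfl,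
      word_core hn hd hz (Nat.find hz) le_rfl hD0 []]
    simp
  · rw [if_neg (by rw [hpK0]; exact hc1)]
    by_cases hc3 : m - (Nat.find hz : ZMod (n + 1)) = i
    · have hfK0 : wallSign n m i h (Nat.find hz) = some true := by
        unfold wallSign
        rw [if_neg (by simp [hK0]), if_pos ⟨by rw [hcol0]; exact hc3, hslot0⟩]
      rw [List.filterMap_cons_some (by rw [hfK0]; rfl)]
      rw [if_pos (by rw [hpK0]; exact hc3)]
      rw [reduceSigns_eq, reduceSigns_eq]
      simp only [List.nil_append, List.singleton_append, List.foldl_cons]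
      rw [word_core hn hd hz (Nat.find hz) le_rfl hD0, if_neg hc1]
      simp
    · have hfK0 : wallSign n m i h (Nat.find hz) = none := by
        unfold wallSign
        rw [if_neg (by simp [hK0]), if_neg]
        rintro ⟨hc, -⟩
        rw [hcol0] at hc
        exact hc3 hc
      rw [List.filterMap_cons_none (by rw [hfK0]; rfl)]
      rw [if_neg (by rw [hpK0]; exact hc3)]
      rw [reduceSigns_eq, reduceSigns_eq]
      simp only [List.nil_append, List.append_nil]
      rw [word_core hn hd hz (Nat.find hz) le_rfl hD0, if_neg hc1]
      simp

lemma wallWord_mem (hz : ∃ K, h K = 0) {k : ℕ} {b : Bool}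
    (hmem : (k, b) ∈ wallWord n m i h) : wallSign n m i h k = some b := by
  unfold wallWord at hmem
  rw [dif_pos hz, reduceSigns_eq, List.mem_reverse] at hmem
  rcases mem_foldl_stp _ _ _ hmem with hc | hc
  · simp at hc
  · rw [List.mem_filterMap] at hc
    obtain ⟨a, -, ha⟩ := hc
    cases hs : wallSign n m i h a with
    | none => rw [hs] at ha; simp at ha
    | some s =>
      rw [hs] at ha
      have ha' : a = k ∧ s = b := by simpa using ha
      obtain ⟨rfl, rfl⟩ := ha'
      exact hs

end WordEq
section Helpers

lemma mod_interval_eq {n a b c : ℕ} (hab : (a : ZMod (n + 1)) = b)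
    (ha1 : c ≤ a) (ha2 : a ≤ c + n) (hb1 : c ≤ b) (hb2 : b ≤ c + n) : a = b := by
  rw [ZMod.natCast_eq_natCast_iff] at hab
  rcases le_total a b with hle | hle
  · have hd := (Nat.modEq_iff_dvd' hle).mp hab
    have := Nat.eq_zero_of_dvd_of_lt hd (show b - a < n + 1 by omega)
    omega
  · have hd := (Nat.modEq_iff_dvd' hle).mp hab.symm
    have := Nat.eq_zero_of_dvd_of_lt hd (show a - b < n + 1 by omega)
    omega

lemma surj_cast (n : ℕ) (m : ZMod (n + 1)) (p : ℕ → ZMod (n + 1)) (N : ℕ)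
    (hN : ∀ k ≥ N, p k = groundPath n m k) :
    ∀ d k, N ≤ k + d →
      ((∑ j ∈ Finset.Ico k N, (p j - p (j + 1) - 1).val : ℕ) : ZMod (n + 1))
        = p k - m + k := by
  intro d
  induction d with
  | zero =>
    intro k hk
    rw [Finset.Ico_eq_empty (by omega), Finset.sum_empty, hN k (by omega)]
    unfold groundPath
    push_cast
    ring
  | succ d ihd =>
    intro k hk
    by_cases hk' : N ≤ k + d
    · exact ihd k hk'
    · have hkN : k < N := by omega
      rw [Finset.sum_eq_sum_Ico_succ_bot hkN, Nat.cast_add, ihd (k + 1) (by omega),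
        ZMod.natCast_val, ZMod.cast_id]
      push_cast
      ring

end Helpers

section Ops

lemma ops_comm (n : ℕ) (hn : 1 ≤ n) (m : ZMod (n + 1)) (h : ℕ → ℕ)
    (hd : ∀ k, h (k + 1) ≤ h k) (hz : ∃ K, h K = 0) (hr : ReducedWall n h)
    (i : ZMod (n + 1)) :
    (wallE n m i h).map (wallToPath n m) = pathE n m i (wallToPath n m h) ∧
    (wallF n m i h).map (wallToPath n m) = pathF n m i (wallToPath n m h) := by
  have hzero : ∀ k, Nat.find hz ≤ k → h k = 0 := fun k hk =>
    Nat.le_zero.mp ((Nat.find_spec hz) ▸ h_anti hd hk)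
  have hground : ∀ k ≥ Nat.find hz, wallToPath n m h k = groundPath n m k := by
    intro k hk
    unfold wallToPath groundPath
    rw [hzero k hk]
    push_cast
    ring
  have hPw : ∃ N, ∀ k ≥ N, wallToPath n m h k = groundPath n m k := ⟨_, hground⟩
  have hfind : ∀ (inst : DecidablePred fun N => ∀ k ≥ N, wallToPath n m h k = groundPath n m k),
      @Nat.find _ inst hPw = Nat.find hz := by
    intro inst
    apply le_antisymm (Nat.find_min' hPw hground)
    by_contra hlt
    push_neg at hlt
    have hK1 : 1 ≤ Nat.find hz := by omega
    have hg1 : wallToPath n m h (Nat.find hz - 1) = groundPath n m (Nat.find hz - 1) :=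
      Nat.find_spec hPw _ (by omega)
    have hcast : ((h (Nat.find hz - 1) : ℕ) : ZMod (n + 1)) = 0 := by
      unfold wallToPath groundPath at hg1
      linear_combination hg1
    have hdvd : (n + 1) ∣ h (Nat.find hz - 1) :=
      (ZMod.natCast_eq_zero_iff _ _).mp hcast
    have hub : h (Nat.find hz - 1) ≤ n := by
      have h1 := hr (Nat.find hz - 1)
      have h2 : Nat.find hz - 1 + 1 = Nat.find hz := by omega
      rw [h2] at h1
      have h3 : h (Nat.find hz) = 0 := Nat.find_spec hz
      omega
    have h0 : h (Nat.find hz - 1) = 0 := Nat.eq_zero_of_dvd_of_lt hdvd (by omega)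
    exact Nat.find_min hz (show Nat.find hz - 1 < Nat.find hz by omega) h0
  have hword := word_eq (m := m) (i := i) hn hd hz
  have hg : groundPath n m (Nat.find hz) = m - (Nat.find hz : ZMod (n + 1)) := rfl
  constructor
  · -- E operators
    unfold pathE
    rw [dif_pos hPw]
    simp only [hfind, hword, hg]
    by_cases hcW : (wallWord n m i h).countP (fun x => !x.2) = 0
    · have hnone : (wallWord n m i h).reverse.find? (fun x => !x.2) = none := by
        rw [List.find?_eq_none]
        intro x hx
        have := List.countP_eq_zero.mp hcW x (List.mem_reverse.mp hx)
        simpa using this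
      have hE : wallE n m i h = none := by
        unfold wallE
        rw [hnone]
      rw [hE, if_pos]
      · rfl
      · rw [List.countP_append, hcW]
        by_cases hc1 : m - (Nat.find hz : ZMod (n + 1)) = i + 1 <;> simp [hc1]
    · have hposW : 0 < (wallWord n m i h).countP (fun x => !x.2) := by omega
      obtain ⟨x0, hx0mem, hx0⟩ := List.countP_pos_iff.mp hposW
      cases hf : (wallWord n m i h).reverse.find? (fun x => !x.2) with
      | none =>
        exact absurd (List.find?_eq_none.mp hf x0 (List.mem_reverse.mpr hx0mem)) (by simp [hx0])
      | some x =>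
        obtain ⟨k, b⟩ := x
        have hb : b = false := by
          have := List.find?_some hf
          simpa using this
        subst hb
        have hmem : (k, false) ∈ wallWord n m i h :=
          List.mem_reverse.mp (List.mem_of_find?_eq_some hf)
        have hsign := wallWord_mem hz hmem
        obtain ⟨hk1, hpk⟩ := wallSign_false hsign
        have hE : wallE n m i h = some (Function.update h k (h k - 1)) := by
          unfold wallE
          rw [hf]
        rw [hE, if_neg, List.reverse_append, List.find?_append, hf]
        · simp only [Option.map_some, Option.or]
          congr 1
          funext j
          by_cases hj : j = k
          · subst hj
            simp only [wallToPath, Function.update_self]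
            rw [Nat.cast_sub hk1, Nat.cast_one]
            ring
          · simp [wallToPath, Function.update_of_ne hj]
        · intro hle
          rw [List.countP_append] at hle
          by_cases hc1 : m - (Nat.find hz : ZMod (n + 1)) = i + 1
          · rw [if_pos hc1, if_pos hc1] at hle
            have h1 : List.countP (fun x => !x.2) [((Nat.find hz : ℕ), false)] = 1 := by simp
            omega
          · rw [if_neg hc1, if_neg hc1] at hle
            have h1 : List.countP (fun x => !x.2) ([] : List (ℕ × Bool)) = 0 := by simp
            omega
  · -- F operators
    unfold pathF
    rw [dif_pos hPw]
    simp only [hfind, hword, hg]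
    have hskip : ((if m - (Nat.find hz : ZMod (n + 1)) = i + 1
          then [((Nat.find hz : ℕ), false)] else []) ++ wallWord n m i h).find?
          (fun x => x.2) = (wallWord n m i h).find? (fun x => x.2) := by
      by_cases hc1 : m - (Nat.find hz : ZMod (n + 1)) = i + 1
      · rw [if_pos hc1, List.singleton_append, List.find?_cons_of_neg (by simp)]
      · rw [if_neg hc1, List.nil_append]
    rw [hskip]
    cases hf : (wallWord n m i h).find? (fun x => x.2) with
    | none =>
      have hF : wallF n m i h = none := by
        unfold wallF
        rw [hf]
      rw [hF]
      rfl
    | some x =>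
      obtain ⟨k, b⟩ := x
      have hF : wallF n m i h = some (Function.update h k (h k + 1)) := by
        unfold wallF
        rw [hf]
      rw [hF]
      simp only [Option.map_some]
      congr 1
      funext j
      by_cases hj : j = k
      · subst hj
        simp only [wallToPath, Function.update_self]
        push_cast
        ring
      · simp [wallToPath, Function.update_of_ne hj]

end Ops
/-- for type `A_n^{(1)}` and each fundamental weight `Λ_m`, reading top
boxes of columns is a bijection from the set `𝒴(Λ_m)` of reduced proper Young walls
(n-reduced colored Young diagrams) onto the set `𝒫(Λ_m)` of `Λ_m`-paths in the level-1
perfect crystal, and this bijection commutes with all Kashiwara operators `ẽ_i, f̃_i`;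
hence `𝒴(Λ_m) ≅ B(Λ_m)` as affine crystals, by the path realization of `B(Λ_m)`. -/
theorem reduced_walls_isomorphic_to_paths (n : ℕ) (hn : 1 ≤ n) (m : ZMod (n + 1)) :
    Set.BijOn (wallToPath n m) {h | IsWall h ∧ ReducedWall n h} {p | IsPath n m p} ∧
    (∀ h : ℕ → ℕ, IsWall h → ReducedWall n h → ∀ i : ZMod (n + 1),
      (wallE n m i h).map (wallToPath n m) = pathE n m i (wallToPath n m h) ∧
      (wallF n m i h).map (wallToPath n m) = pathF n m i (wallToPath n m h)) := by
  constructor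
  · refine ⟨?_, ?_, ?_⟩
    · -- MapsTo
      rintro h ⟨⟨hd, hz⟩, -⟩
      refine ⟨Nat.find hz, fun k hk => ?_⟩
      have h0 : h k = 0 := Nat.le_zero.mp ((Nat.find_spec hz) ▸ h_anti hd hk)
      unfold wallToPath groundPath
      rw [h0]
      push_cast
      ring
    · -- InjOn
      rintro h₁ ⟨⟨hd₁, hz₁⟩, hr₁⟩ h₂ ⟨⟨hd₂, hz₂⟩, hr₂⟩ heq
      have key : ∀ d k, max (Nat.find hz₁) (Nat.find hz₂) ≤ k + d → h₁ k = h₂ k := by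
        intro d
        induction d with
        | zero =>
          intro k hk
          have e1 : h₁ k = 0 := Nat.le_zero.mp ((Nat.find_spec hz₁) ▸ h_anti hd₁ (by omega))
          have e2 : h₂ k = 0 := Nat.le_zero.mp ((Nat.find_spec hz₂) ▸ h_anti hd₂ (by omega))
          omega
        | succ d ihd =>
          intro k hk
          by_cases hk' : max (Nat.find hz₁) (Nat.find hz₂) ≤ k + d
          · exact ihd k hk'
          · have hk1 : h₁ (k + 1) = h₂ (k + 1) := ihd (k + 1) (by omega)
            have hcast : ((h₁ k : ℕ) : ZMod (n + 1)) = h₂ k := by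
              have hck := congrFun heq k
              simp only [wallToPath] at hck
              linear_combination hck
            have b1 := hd₁ k
            have b2 := hr₁ k
            have b3 := hd₂ k
            have b4 := hr₂ k
            exact mod_interval_eq (c := h₂ (k + 1)) hcast (by omega) (by omega)
              (by omega) (by omega)
      funext k
      exact key (max (Nat.find hz₁) (Nat.find hz₂)) k (by omega)
    · -- SurjOn
      rintro p ⟨N, hN⟩
      refine ⟨fun k => ∑ j ∈ Finset.Ico k N, (p j - p (j + 1) - 1).val, ⟨⟨?_, ⟨N, ?_⟩⟩, ?_⟩, ?_⟩
      · intro k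
        exact Finset.sum_le_sum_of_subset (Finset.Ico_subset_Ico (by omega) le_rfl)
      · simp [Finset.Ico_self]
      · intro k
        beta_reduce
        by_cases hkN : k < N
        · rw [Finset.sum_eq_sum_Ico_succ_bot hkN]
          have := ZMod.val_lt (p k - p (k + 1) - 1)
          omega
        · rw [Finset.Ico_eq_empty (by omega), Finset.sum_empty]
          omega
      · funext k
        have hc := surj_cast n m p N hN N k (by omega)
        unfold wallToPath
        rw [hc]
        ring
  · intro h hw hr i
    exact ops_comm n hn m h hw.1 hw.2 hr i
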